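/- Let n ≥ 2, let P = (p_{i1 i2 i3 i4}) be a 4th order, n-dimensional stochastic tensor, and let Q be its reduced transition matrix. Then for all triples (i1,i2,i3) and (j1,j2,j3) from S = {1,…,n}, the (row (i1,i2,i3), column (j1,j2,j3)) entry of Q^3 equals p_{i1 i2 i3 j1} · p_{i2 i3 j1 j2} · p_{i3 j1 j2 j3}. -/

import Mathlib

open Finset

/-- A 4th order, `n`-dimensional tensor: entry `p_{i₁ i₂ i₃ i₄}` is `P i₁ i₂ i₃ i₄`. -/
abbrev Tensor4 (n : ℕ) := Fin n → Fin n → Fin n → Fin n → ℝ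

/-- `P` is a stochastic tensor. -/
def IsStochastic4 {n : ℕ} (P : Tensor4 n) : Prop :=
  (∀ i₁ i₂ i₃ i₄, 0 ≤ P i₁ i₂ i₃ i₄ ∧ P i₁ i₂ i₃ i₄ ≤ 1) ∧
  ∀ i₂ i₃ i₄, ∑ i₁ : Fin n, P i₁ i₂ i₃ i₄ = 1

/-- The product `A ⊠ B`. -/
def tmul4 {n : ℕ} (A B : Tensor4 n) : Tensor4 n :=
  fun i₁ i₂ i₃ i₄ => ∑ j : Fin n, A i₁ j i₂ i₃ * B j i₂ i₃ i₄

/-- Tensor powers: `tpow4 P k` is `P^k`, with entries the `k`-step transition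
probabilities `p^{(k)}_{i₁ i₂ i₃ i₄}`; `P^0` is the identity tensor. -/
def tpow4 {n : ℕ} (P : Tensor4 n) : ℕ → Tensor4 n
  | 0 => fun i₁ i₂ _ _ => if i₁ = i₂ then 1 else 0
  | k + 1 => tmul4 (tpow4 P k) P

/-- The reduced transition matrix `Q` of a third order chain: rows and columns are
indexed by triples, `Q (i₁,i₂,i₃) (j₁,j₂,j₃) = p_{i₁ i₂ i₃ j₃}` if `j₁ = i₂` and
`j₂ = i₃`, and `0` otherwise. -/
def reduced4 {n : ℕ} (P : Tensor4 n) :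
    Matrix (Fin n × Fin n × Fin n) (Fin n × Fin n × Fin n) ℝ :=
  fun r c => if c.1 = r.2.1 ∧ c.2.1 = r.2.2 then P r.1 r.2.1 r.2.2 c.2.2 else 0

theorem reduced4_apply_mk {n : ℕ} (P : Tensor4 n) (i₁ i₂ i₃ j₁ j₂ j₃ : Fin n) :
    reduced4 P (i₁, i₂, i₃) (j₁, j₂, j₃) =
      if j₁ = i₂ ∧ j₂ = i₃ then P i₁ i₂ i₃ j₃ else 0 :=
  rfl

theorem reduced4_mul_apply {n : ℕ} {γ : Type*} (P : Tensor4 n)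
    (M : Matrix (Fin n × Fin n × Fin n) γ ℝ) (i₁ i₂ i₃ : Fin n) (c : γ) :
    (reduced4 P * M) (i₁, i₂, i₃) c = ∑ j, P i₁ i₂ i₃ j * M (i₂, i₃, j) c := by
  simp only [Matrix.mul_apply, Fintype.sum_prod_type, reduced4_apply_mk, ite_and, ite_mul,
    zero_mul, sum_ite_irrel, sum_const_zero, sum_ite_eq', mem_univ, ↓reduceIte]

theorem reduced_cube_entry {n : ℕ} (P : Tensor4 n)
    (i₁ i₂ i₃ j₁ j₂ j₃ : Fin n) :
    (reduced4 P ^ 3) (i₁, i₂, i₃) (j₁, j₂, j₃) =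
      P i₁ i₂ i₃ j₁ * P i₂ i₃ j₁ j₂ * P i₃ j₁ j₂ j₃ := by
  rw [pow_three, reduced4_mul_apply]
  simp only [reduced4_mul_apply, reduced4_apply_mk, ite_and, mul_ite, mul_zero, sum_ite_irrel,
    sum_ite_eq, mem_univ, ↓reduceIte, sum_const_zero, mul_assoc]
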